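/- arXiv:2302.10949 — 4 statements merged into one kernel-verified Lean document; each statement's English description precedes it below -/
import Mathlib

section
/- Let A be a nonzero N×N real matrix with a structured labelling (L, r, c, a) of its nonzero entries, and let S_c, S_r be positive reals. Then for all indices i, j: Σ_{p=(d,m)∈L} (a_d/‖A‖_max)·(1/√S_c)·(1/√S_r)·[r(p)=i]·[c(p)=j] = A_{ij}/(√(S_c·S_r)·‖A‖_max), where [·] denotes the indicator (1 if the condition holds, 0 otherwise). In particular, the block-encoding circuit built from the column oracle, row oracle and data-loading oracle encodes A with subnormalisation √(S_c·S_r)·‖A‖_max. -/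
/-- The base block-encoding scheme: given a structured labelling `(L, r, c, a)` of the
nonzero entries of a nonzero matrix `A`, the amplitudes produced by the circuit built from
the column oracle, row oracle and data-loading oracle reproduce
`A i j / (√(S_c·S_r)·‖A‖_max)`. -/
theorem stmt_1 (N D M : ℕ) (A : Matrix (Fin N) (Fin N) ℝ) (hA : A ≠ 0)
    (L : Finset (Fin D × Fin M)) (r c : Fin D × Fin M → Fin N) (a : Fin D → ℝ)
    (hinj : ∀ p ∈ L, ∀ q ∈ L, r p = r q → c p = c q → p = q)
    (hval : ∀ p ∈ L, A (r p) (c p) = a p.1)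
    (hzero : ∀ i j, (∀ p ∈ L, ¬(r p = i ∧ c p = j)) → A i j = 0)
    (Amax : ℝ)
    (hAmax : IsGreatest (Set.range fun q : Fin N × Fin N => |A q.1 q.2|) Amax)
    (S_c S_r : ℝ) (hSc : 0 < S_c) (hSr : 0 < S_r) :
    ∀ i j, (∑ p ∈ L, (a p.1 / Amax) * (1 / Real.sqrt S_c) * (1 / Real.sqrt S_r) *
        (if r p = i then (1 : ℝ) else 0) * (if c p = j then (1 : ℝ) else 0))
      = A i j / (Real.sqrt (S_c * S_r) * Amax) := by
  intro i j
  have hsqrt : Real.sqrt (S_c * S_r) = Real.sqrt S_c * Real.sqrt S_r :=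
    Real.sqrt_mul hSc.le _
  have key : ∀ p ∈ L, (a p.1 / Amax) * (1 / Real.sqrt S_c) * (1 / Real.sqrt S_r) *
        (if r p = i then (1 : ℝ) else 0) * (if c p = j then (1 : ℝ) else 0)
      = if r p = i ∧ c p = j then a p.1 / (Real.sqrt (S_c * S_r) * Amax) else 0 := by
    intro p hp
    rw [hsqrt]
    by_cases h1 : r p = i <;> by_cases h2 : c p = j <;> simp [h1, h2] <;> ring
  rw [Finset.sum_congr rfl key, Finset.sum_ite, Finset.sum_const_zero, add_zero]
  by_cases hex : ∃ p ∈ L, r p = i ∧ c p = j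
  · obtain ⟨p₀, hp₀, hri, hcj⟩ := hex
    have hfilt : L.filter (fun p => r p = i ∧ c p = j) = {p₀} := by
      ext q
      simp only [Finset.mem_filter, Finset.mem_singleton]
      constructor
      · rintro ⟨hq, hq1, hq2⟩
        exact hinj q hq p₀ hp₀ (hq1.trans hri.symm) (hq2.trans hcj.symm)
      · rintro rfl; exact ⟨hp₀, hri, hcj⟩
    rw [hfilt, Finset.sum_singleton]
    have := hval p₀ hp₀
    rw [hri, hcj] at this
    rw [this]
  · have hfilt : L.filter (fun p => r p = i ∧ c p = j) = ∅ := by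
      rw [Finset.filter_eq_empty_iff]
      intro p hp hc
      exact hex ⟨p, hp, hc⟩
    rw [hfilt, Finset.sum_empty]
    rw [hzero i j (by intro p hp hc; exact hex ⟨p, hp, hc⟩), zero_div]
end

section
/- Let a_0, …, a_{D−1} be positive reals with D ≥ 1 and let 1/2 ≤ p ≤ q ≤ 1. Then (Σ_d a_d)² ≤ (Σ_d a_d^{2p})·(Σ_d a_d^{2−2p}) ≤ (Σ_d a_d^{2q})·(Σ_d a_d^{2−2q}). Consequently, the PREP/UNPREP subnormalisation α_p = (√(S_c·S_r)/D)·√((Σ_d a_d^{2p})·(Σ_d a_d^{2−2p})) satisfies α_{1/2} = (√(S_c·S_r)/D)·Σ_d a_d ≤ α_p ≤ α_q for any positive reals S_c, S_r, so p = 1/2 is the optimal choice. -/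
lemma key_cosh (x : ℝ) (hx : 0 < x) {s t : ℝ} (hs : 0 ≤ s) (hst : s ≤ t) :
    x ^ s + x ^ (-s) ≤ x ^ t + x ^ (-t) := by
  have e1 : x ^ t * x ^ (-(s + t)) = x ^ (-s) := by
    rw [← Real.rpow_add hx]; ring_nf
  have e2 : x ^ s * x ^ (-(s + t)) = x ^ (-t) := by
    rw [← Real.rpow_add hx]; ring_nf
  have h : 0 ≤ (x ^ t - x ^ s) * (1 - x ^ (-(s + t))) := by
    rcases le_total 1 x with h1 | h1
    · apply mul_nonneg
      · have := Real.rpow_le_rpow_of_exponent_le h1 hst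
        linarith
      · have : x ^ (-(s + t)) ≤ 1 :=
          Real.rpow_le_one_of_one_le_of_nonpos h1 (by linarith)
        linarith
    · have h2 := Real.rpow_le_rpow_of_exponent_ge hx h1 hst
      have h3 : (1:ℝ) ≤ x ^ (-(s + t)) := by
        have := Real.rpow_le_rpow_of_exponent_ge hx h1 (show -(s+t) ≤ (0:ℝ) by linarith)
        simpa using this
      nlinarith
  nlinarith [h, e1, e2]

lemma pair_ineq {x y : ℝ} (hx : 0 < x) (hy : 0 < y) {s t : ℝ} (hs : 0 ≤ s) (hst : s ≤ t) :
    x ^ (1 + s) * y ^ (1 - s) + y ^ (1 + s) * x ^ (1 - s)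
      ≤ x ^ (1 + t) * y ^ (1 - t) + y ^ (1 + t) * x ^ (1 - t) := by
  have hxy : ∀ u : ℝ, x ^ (1 + u) * y ^ (1 - u) + y ^ (1 + u) * x ^ (1 - u)
      = x * y * ((x / y) ^ u + (x / y) ^ (-u)) := by
    intro u
    have h1 : (x / y) ^ u = x ^ u / y ^ u := Real.div_rpow hx.le hy.le u
    have h2 : (x / y) ^ (-u) = x ^ (-u) / y ^ (-u) := Real.div_rpow hx.le hy.le (-u)
    rw [h1, h2, show (1:ℝ) + u = 1 + u from rfl, Real.rpow_add hx, Real.rpow_add hy,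
      show (1:ℝ) - u = 1 + (-u) by ring, Real.rpow_add hx, Real.rpow_add hy,
      Real.rpow_one, Real.rpow_one, Real.rpow_neg hx.le, Real.rpow_neg hy.le]
    have hxu : (x:ℝ) ^ u ≠ 0 := (Real.rpow_pos_of_pos hx u).ne'
    have hyu : (y:ℝ) ^ u ≠ 0 := (Real.rpow_pos_of_pos hy u).ne'
    field_simp
  rw [hxy s, hxy t]
  have := key_cosh (x / y) (div_pos hx hy) hs hst
  nlinarith [mul_pos hx hy]

lemma callebaut {D : ℕ} (a : Fin D → ℝ) (ha : ∀ d, 0 < a d) {s t : ℝ}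
    (hs : 0 ≤ s) (hst : s ≤ t) :
    (∑ d, a d ^ (1 + s)) * (∑ d, a d ^ (1 - s))
      ≤ (∑ d, a d ^ (1 + t)) * (∑ d, a d ^ (1 - t)) := by
  have key : ∀ u : ℝ, 2 * ((∑ d, a d ^ (1 + u)) * (∑ d, a d ^ (1 - u)))
      = ∑ i, ∑ j, (a i ^ (1 + u) * a j ^ (1 - u) + a j ^ (1 + u) * a i ^ (1 - u)) := by
    intro u
    have h1 : (∑ d, a d ^ (1 + u)) * (∑ d, a d ^ (1 - u))
        = ∑ i, ∑ j, a i ^ (1 + u) * a j ^ (1 - u) := Finset.sum_mul_sum _ _ _ _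
    have h2 : (∑ i, ∑ j, a j ^ (1 + u) * a i ^ (1 - u))
        = ∑ j, ∑ i, a j ^ (1 + u) * a i ^ (1 - u) := Finset.sum_comm
    have h3 : (∑ j, ∑ i, a j ^ (1 + u) * a i ^ (1 - u))
        = ∑ i, ∑ j, a i ^ (1 + u) * a j ^ (1 - u) := rfl
    simp only [Finset.sum_add_distrib]
    rw [h2, h3]
    linarith [h1]
  have h := key s
  have h' := key t
  have hle : (∑ i, ∑ j, (a i ^ (1 + s) * a j ^ (1 - s) + a j ^ (1 + s) * a i ^ (1 - s)))
      ≤ ∑ i, ∑ j, (a i ^ (1 + t) * a j ^ (1 - t) + a j ^ (1 + t) * a i ^ (1 - t)) := by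
    apply Finset.sum_le_sum; intro i _
    apply Finset.sum_le_sum; intro j _
    exact pair_ineq (ha i) (ha j) hs hst
  linarith



/-- Cauchy–Schwarz and Callebaut: for positive `a_d` and `1/2 ≤ p ≤ q ≤ 1`,
`(∑ a_d)² ≤ (∑ a_d^{2p})(∑ a_d^{2-2p}) ≤ (∑ a_d^{2q})(∑ a_d^{2-2q})`; hence the
PREP/UNPREP subnormalisation `α_p` satisfies `α_{1/2} = (√(S_c·S_r)/D)·∑ a_d ≤ α_p ≤ α_q`,
so `p = 1/2` is optimal. -/
theorem stmt_7 (D : ℕ) (hD : 0 < D) (a : Fin D → ℝ) (ha : ∀ d, 0 < a d)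
    (p q : ℝ) (hp : 1 / 2 ≤ p) (hpq : p ≤ q) (hq : q ≤ 1)
    (S_c S_r : ℝ) (hSc : 0 < S_c) (hSr : 0 < S_r) :
    (∑ d, a d) ^ 2 ≤ (∑ d, a d ^ (2 * p)) * (∑ d, a d ^ (2 - 2 * p)) ∧
    (∑ d, a d ^ (2 * p)) * (∑ d, a d ^ (2 - 2 * p))
      ≤ (∑ d, a d ^ (2 * q)) * (∑ d, a d ^ (2 - 2 * q)) ∧
    (Real.sqrt (S_c * S_r) / D) *
        Real.sqrt ((∑ d, a d ^ (2 * (1 / 2 : ℝ))) * (∑ d, a d ^ (2 - 2 * (1 / 2 : ℝ))))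
      = (Real.sqrt (S_c * S_r) / D) * ∑ d, a d ∧
    (Real.sqrt (S_c * S_r) / D) * ∑ d, a d
      ≤ (Real.sqrt (S_c * S_r) / D) *
          Real.sqrt ((∑ d, a d ^ (2 * p)) * (∑ d, a d ^ (2 - 2 * p))) ∧
    (Real.sqrt (S_c * S_r) / D) *
        Real.sqrt ((∑ d, a d ^ (2 * p)) * (∑ d, a d ^ (2 - 2 * p)))
      ≤ (Real.sqrt (S_c * S_r) / D) *
          Real.sqrt ((∑ d, a d ^ (2 * q)) * (∑ d, a d ^ (2 - 2 * q))) := by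
  have hsum_pos : 0 < ∑ d, a d :=
    Finset.sum_pos (fun d _ => ha d) (Finset.univ_nonempty_iff.2 ⟨⟨0, hD⟩⟩)
  have hone : ∀ d, a d ^ (1 : ℝ) = a d := fun d => Real.rpow_one (a d)
  have hrw : ∀ r : ℝ, (∑ d, a d ^ (2 * r)) * (∑ d, a d ^ (2 - 2 * r))
      = (∑ d, a d ^ (1 + (2 * r - 1))) * (∑ d, a d ^ (1 - (2 * r - 1))) := by
    intro r
    rw [show (1:ℝ) + (2 * r - 1) = 2 * r by ring, show (1:ℝ) - (2 * r - 1) = 2 - 2 * r by ring]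
  -- Cauchy–Schwarz: Callebaut with s = 0
  have cs : (∑ d, a d) ^ 2 ≤ (∑ d, a d ^ (2 * p)) * (∑ d, a d ^ (2 - 2 * p)) := by
    have h := callebaut a ha (le_refl (0:ℝ)) (show (0:ℝ) ≤ 2 * p - 1 by linarith)
    rw [hrw p]
    simpa [hone, sq] using h
  have cal : (∑ d, a d ^ (2 * p)) * (∑ d, a d ^ (2 - 2 * p))
      ≤ (∑ d, a d ^ (2 * q)) * (∑ d, a d ^ (2 - 2 * q)) := by
    rw [hrw p, hrw q]
    exact callebaut a ha (show (0:ℝ) ≤ 2 * p - 1 by linarith)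
      (show 2 * p - 1 ≤ 2 * q - 1 by linarith)
  have heq : Real.sqrt ((∑ d, a d ^ (2 * (1 / 2 : ℝ))) * (∑ d, a d ^ (2 - 2 * (1 / 2 : ℝ))))
      = ∑ d, a d := by
    rw [show (2:ℝ) * (1/2) = 1 by norm_num, show (2:ℝ) - 1 = 1 by norm_num]
    simp only [hone]
    exact Real.sqrt_mul_self hsum_pos.le
  have hc : 0 ≤ Real.sqrt (S_c * S_r) / D := by positivity
  refine ⟨cs, cal, by rw [heq], ?_, ?_⟩
  · apply mul_le_mul_of_nonneg_left _ hc
    calc ∑ d, a d = Real.sqrt ((∑ d, a d) ^ 2) := (Real.sqrt_sq hsum_pos.le).symm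
      _ ≤ _ := Real.sqrt_le_sqrt cs
  · exact mul_le_mul_of_nonneg_left (Real.sqrt_le_sqrt cal) hc
end

section
/- Let A be a nonzero N×N real matrix with N ≥ 1. Let D be the number of distinct values among the nonzero entries of A, let S_c be the maximum over columns j of the number of rows i with A_{ij} ≠ 0, and let S_r be the maximum over rows i of the number of columns j with A_{ij} ≠ 0. If D ≤ N, then (N² + N)·‖A‖_F ≥ N²·‖A‖_max ≥ D·√(S_c·S_r)·‖A‖_max, where ‖A‖_F = √(Σ_{i,j} A_{ij}²) is the Frobenius norm and ‖A‖_max = max_{i,j}|A_{ij}|. Hence, when D ≤ N, the figure of merit (data loading cost)·(subnormalisation) of the structured base scheme is at most that of the quantum-data-structure scheme. -/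
/-- If the number `D` of distinct nonzero values of a nonzero `N × N` matrix satisfies
`D ≤ N`, then `(N² + N)·‖A‖_F ≥ N²·‖A‖_max ≥ D·√(S_c·S_r)·‖A‖_max`, where `S_c` (`S_r`) is
the maximal number of nonzero entries per column (row): the structured base scheme's
figure of merit is at most that of the quantum-data-structure scheme. -/
theorem stmt_9 (N : ℕ) (hN : 0 < N) (A : Matrix (Fin N) (Fin N) ℝ) (hA : A ≠ 0)
    (D S_c S_r : ℕ)
    (hD : D = (((Finset.univ : Finset (Fin N × Fin N)).filter
      (fun q : Fin N × Fin N => A q.1 q.2 ≠ 0)).image (fun q => A q.1 q.2)).card)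
    (hSc : S_c = Finset.univ.sup (fun j : Fin N =>
      (Finset.univ.filter (fun i : Fin N => A i j ≠ 0)).card))
    (hSr : S_r = Finset.univ.sup (fun i : Fin N =>
      (Finset.univ.filter (fun j : Fin N => A i j ≠ 0)).card))
    (hDN : D ≤ N) :
    ((N : ℝ) ^ 2 + N) * Real.sqrt (∑ i, ∑ j, (A i j) ^ 2)
        ≥ (N : ℝ) ^ 2 * Finset.univ.sup' ⟨(⟨0, hN⟩, ⟨0, hN⟩), Finset.mem_univ _⟩
            (fun q : Fin N × Fin N => |A q.1 q.2|) ∧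
    (N : ℝ) ^ 2 * Finset.univ.sup' ⟨(⟨0, hN⟩, ⟨0, hN⟩), Finset.mem_univ _⟩
            (fun q : Fin N × Fin N => |A q.1 q.2|)
      ≥ (D : ℝ) * Real.sqrt ((S_c : ℝ) * (S_r : ℝ)) *
          Finset.univ.sup' ⟨(⟨0, hN⟩, ⟨0, hN⟩), Finset.mem_univ _⟩
            (fun q : Fin N × Fin N => |A q.1 q.2|) := by
  set M := Finset.univ.sup'
      (⟨((⟨0, hN⟩ : Fin N), (⟨0, hN⟩ : Fin N)), Finset.mem_univ _⟩ :
        (Finset.univ : Finset (Fin N × Fin N)).Nonempty)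
      (fun q : Fin N × Fin N => |A q.1 q.2|) with hM
  have hM0 : 0 ≤ M := by
    rw [hM]
    exact le_trans (abs_nonneg _)
      (Finset.le_sup' (fun q : Fin N × Fin N => |A q.1 q.2|)
        (Finset.mem_univ ((⟨0, hN⟩ : Fin N), (⟨0, hN⟩ : Fin N))))
  have hsum0 : 0 ≤ ∑ i, ∑ j, (A i j) ^ 2 := by positivity
  -- M ≤ Frobenius norm
  have hMF : M ≤ Real.sqrt (∑ i, ∑ j, (A i j) ^ 2) := by
    obtain ⟨q, -, hq⟩ := Finset.exists_mem_eq_sup' (α := ℝ)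
      ⟨((⟨0, hN⟩ : Fin N), (⟨0, hN⟩ : Fin N)), Finset.mem_univ _⟩
      (fun q : Fin N × Fin N => |A q.1 q.2|)
    rw [hM, hq]
    have h1 : (A q.1 q.2) ^ 2 ≤ ∑ i, ∑ j, (A i j) ^ 2 := by
      calc (A q.1 q.2) ^ 2 ≤ ∑ j, (A q.1 j) ^ 2 :=
            Finset.single_le_sum (f := fun j => (A q.1 j) ^ 2)
              (fun j _ => sq_nonneg _) (Finset.mem_univ q.2)
        _ ≤ ∑ i, ∑ j, (A i j) ^ 2 :=
            Finset.single_le_sum (f := fun i => ∑ j, (A i j) ^ 2)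
              (fun i _ => Finset.sum_nonneg fun j _ => sq_nonneg _) (Finset.mem_univ q.1)
    calc |A q.1 q.2| = Real.sqrt ((A q.1 q.2) ^ 2) := (Real.sqrt_sq_eq_abs _).symm
      _ ≤ _ := Real.sqrt_le_sqrt h1
  constructor
  · calc (N : ℝ) ^ 2 * M ≤ (N : ℝ) ^ 2 * Real.sqrt (∑ i, ∑ j, (A i j) ^ 2) := by
          apply mul_le_mul_of_nonneg_left hMF (by positivity)
      _ ≤ ((N : ℝ) ^ 2 + N) * Real.sqrt (∑ i, ∑ j, (A i j) ^ 2) := by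
          apply mul_le_mul_of_nonneg_right _ (Real.sqrt_nonneg _)
          have : (0 : ℝ) ≤ N := Nat.cast_nonneg N
          linarith
  · have hScN : S_c ≤ N := by
      rw [hSc]
      apply Finset.sup_le
      intro j _
      calc _ ≤ (Finset.univ : Finset (Fin N)).card := Finset.card_filter_le _ _
        _ = N := Finset.card_univ.trans (Fintype.card_fin N)
    have hSrN : S_r ≤ N := by
      rw [hSr]
      apply Finset.sup_le
      intro i _
      calc _ ≤ (Finset.univ : Finset (Fin N)).card := Finset.card_filter_le _ _
        _ = N := Finset.card_univ.trans (Fintype.card_fin N)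
    have hsqrt : Real.sqrt ((S_c : ℝ) * (S_r : ℝ)) ≤ N := by
      rw [show ((N : ℝ)) = Real.sqrt ((N : ℝ) * N) by
        rw [Real.sqrt_mul_self (Nat.cast_nonneg N)]]
      apply Real.sqrt_le_sqrt
      exact mul_le_mul (by exact_mod_cast hScN) (by exact_mod_cast hSrN)
        (Nat.cast_nonneg _) (Nat.cast_nonneg _)
    have hDR : (D : ℝ) ≤ N := by exact_mod_cast hDN
    have key : (D : ℝ) * Real.sqrt ((S_c : ℝ) * (S_r : ℝ)) ≤ (N : ℝ) ^ 2 := by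
      calc (D : ℝ) * Real.sqrt ((S_c : ℝ) * (S_r : ℝ)) ≤ (N : ℝ) * N :=
            mul_le_mul hDR hsqrt (Real.sqrt_nonneg _) (Nat.cast_nonneg _)
        _ = (N : ℝ) ^ 2 := (sq (N : ℝ)).symm
    exact mul_le_mul_of_nonneg_right key hM0
end

section
/- Let A be an N×N real matrix with a structured labelling (L, r, c, a) of its nonzero entries in which all values a_d (0 ≤ d < D) are nonzero, let 0 ≤ p ≤ 1, and let S_c, S_r be positive reals. Define α_p = (√(S_c·S_r)/D)·√((Σ_d |a_d|^{2p})·(Σ_d |a_d|^{2−2p})). Then for all indices i, j: Σ_{q=(d,m)∈L} [r(q)=i]·[c(q)=j] · ( sgn(a_d)·|a_d|^p / √(Σ_{d'} |a_{d'}|^{2p}) ) · ( |a_d|^{1−p} / √(Σ_{d'} |a_{d'}|^{2−2p}) ) · √(D/S_c) · √(D/S_r) = A_{ij}/α_p. That is, the PREP/UNPREP circuit block-encodes A with subnormalisation α_p. -/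
/-- The PREP/UNPREP circuit block-encodes a structured matrix `A` with subnormalisation
`α_p = (√(S_c·S_r)/D)·√((∑_d |a_d|^{2p})·(∑_d |a_d|^{2-2p}))`: for all `i, j` the
postselected amplitude equals `A i j / α_p`. -/
theorem stmt_15 (N D M : ℕ) (A : Matrix (Fin N) (Fin N) ℝ)
    (L : Finset (Fin D × Fin M)) (r c : Fin D × Fin M → Fin N) (a : Fin D → ℝ)
    (hinj : ∀ p ∈ L, ∀ q ∈ L, r p = r q → c p = c q → p = q)
    (hval : ∀ p ∈ L, A (r p) (c p) = a p.1)
    (hzero : ∀ i j, (∀ p ∈ L, ¬(r p = i ∧ c p = j)) → A i j = 0)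
    (ha : ∀ d, a d ≠ 0)
    (p : ℝ) (hp0 : 0 ≤ p) (hp1 : p ≤ 1)
    (S_c S_r : ℝ) (hSc : 0 < S_c) (hSr : 0 < S_r)
    (α : ℝ)
    (hα : α = (Real.sqrt (S_c * S_r) / D) *
      Real.sqrt ((∑ d, |a d| ^ (2 * p)) * (∑ d, |a d| ^ (2 - 2 * p)))) :
    ∀ i j, (∑ q ∈ L, (if r q = i then (1 : ℝ) else 0) * (if c q = j then (1 : ℝ) else 0) *
        (Real.sign (a q.1) * |a q.1| ^ p / Real.sqrt (∑ d, |a d| ^ (2 * p))) *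
        (|a q.1| ^ (1 - p) / Real.sqrt (∑ d, |a d| ^ (2 - 2 * p))) *
        Real.sqrt (D / S_c) * Real.sqrt (D / S_r))
      = A i j / α := by
  intro i j
  by_cases hq : ∃ q ∈ L, r q = i ∧ c q = j
  · obtain ⟨q0, hq0L, hri, hcj⟩ := hq
    have hD : (0:ℝ) < D := by exact_mod_cast Fin.pos q0.1
    have habs : 0 < |a q0.1| := abs_pos.mpr (ha q0.1)
    have hSum1 : 0 < ∑ d, |a d| ^ (2*p) :=
      Finset.sum_pos (fun d _ => Real.rpow_pos_of_pos (abs_pos.mpr (ha d)) _)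
        ⟨q0.1, Finset.mem_univ _⟩
    have hSum2 : 0 < ∑ d, |a d| ^ (2-2*p) :=
      Finset.sum_pos (fun d _ => Real.rpow_pos_of_pos (abs_pos.mpr (ha d)) _)
        ⟨q0.1, Finset.mem_univ _⟩
    rw [Finset.sum_eq_single_of_mem q0 hq0L]
    · rw [if_pos hri, if_pos hcj, ← hri, ← hcj, hval q0 hq0L, hα]
      have h1 : |a q0.1| ^ p * |a q0.1| ^ (1-p) = |a q0.1| := by
        rw [← Real.rpow_add habs, show p + (1-p) = 1 by ring, Real.rpow_one]
      have h2 : Real.sign (a q0.1) * |a q0.1| = a q0.1 := by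
        rcases (ha q0.1).lt_or_gt with h | h
        · rw [Real.sign_of_neg h, abs_of_neg h]; ring
        · rw [Real.sign_of_pos h, abs_of_pos h]; ring
      rw [Real.sqrt_div hD.le, Real.sqrt_div hD.le, Real.sqrt_mul hSum1.le,
        Real.sqrt_mul hSc.le]
      have e1 : Real.sqrt (∑ d, |a d| ^ (2*p)) ≠ 0 := (Real.sqrt_pos.mpr hSum1).ne'
      have e2 : Real.sqrt (∑ d, |a d| ^ (2-2*p)) ≠ 0 := (Real.sqrt_pos.mpr hSum2).ne'
      have e3 : Real.sqrt S_c ≠ 0 := (Real.sqrt_pos.mpr hSc).ne'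
      have e4 : Real.sqrt S_r ≠ 0 := (Real.sqrt_pos.mpr hSr).ne'
      have e5 : (D:ℝ) ≠ 0 := hD.ne'
      have e6 : Real.sqrt D * Real.sqrt D = (D:ℝ) := Real.mul_self_sqrt hD.le
      have key : Real.sign (a q0.1) * |a q0.1| ^ p * |a q0.1| ^ (1-p) = a q0.1 := by
        rw [mul_assoc, h1, h2]
      rw [one_mul, one_mul, div_mul_div_comm, div_mul_div_comm, div_mul_div_comm, key, mul_assoc (a q0.1), e6,
        div_eq_div_iff (by positivity) (by positivity)]
      field_simp
    · intro q hqL hne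
      by_cases h1 : r q = i
      · by_cases h2 : c q = j
        · exact absurd (hinj q hqL q0 hq0L (h1.trans hri.symm) (h2.trans hcj.symm)) hne
        · simp [h2]
      · simp [h1]
  · push_neg at hq
    rw [hzero i j (fun q hqL h => (hq q hqL h.1) h.2), zero_div]
    apply Finset.sum_eq_zero
    intro q hqL
    by_cases h1 : r q = i
    · simp [hq q hqL h1]
    · simp [h1]
end
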